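/- arXiv:1506.09211 — 2 statements merged into one kernel-verified Lean document; each statement's English description precedes it below -/
import Mathlib

section
/- (Corollary 3(b)) Under the mirror descent setup with β = 2 (symmetric finite differences), γ = 0, a_n = a·n^{−1/2}, and δ_n = d·n^{−1} with a, d > 0, for every n ≥ 1: E[J(θ̂_n) − J(θ*)] ≤ (C₁ + 2C₂ + 2C₃)·max(a, a^{−1})/√n + (9/7)·C₄ d⁴ a/n + 2·C₅ d²/n, where C₁ = r²/2, C₂ = c/(2κ), C₃ = K₂² r²/(2κ²), C₄ = b²/κ, C₅ = b r/√(2κ); in particular no log n factor appears. -/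
/-!
Pointwise, the first-order optimality condition of the prox step, the three-point identity of
the Bregman distance `D` and the `κ`-strong convexity of `ψ` give
`J θₙ - J θ* ≤ (D(θ*, θₙ) - D(θ*, θₙ₊₁)) / aₙ + aₙ hₙ² / (4κ) + (θₙ - θ*) (J' θₙ - hₙ)`.
In expectation the last term only sees the bias, since `θₙ` is `ℱₙ`-measurable, so it is at most
`b δₙ² r / √(2κ)`; and `E hₙ²` is at most the conditional variance plus `(|J' θₙ| + |Δₙ|)²`,
with `|θₙ - θ*| ≤ r / √(2κ)`. Summing, the Bregman terms telescope against the nonincreasing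
steps to `r² / (2 aₙ) = O(√n)`, `Σ aᵢ = O(√n)`, and `Σ δᵢ² = O(1)` because `β = 2`, which is why
no `log n` appears; Jensen's inequality passes from the average of the `J θᵢ` to `J θ̂ₙ`.
-/

open MeasureTheory ProbabilityTheory Finset

noncomputable def bregman (ψ ψ' : ℝ → ℝ) (x y : ℝ) : ℝ := ψ x - ψ y - ψ' y * (x - y)

lemma ConvexOn.add_deriv_mul_sub_le {S : Set ℝ} {f : ℝ → ℝ} {f' x y : ℝ}
    (hf : ConvexOn ℝ S f) (hx : x ∈ S) (hy : y ∈ S) (hder : HasDerivAt f f' x) :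
    f x + f' * (y - x) ≤ f y := by
  rcases lt_trichotomy x y with hxy | rfl | hyx
  · have := hf.le_slope_of_hasDerivAt hx hy hxy hder
    rw [slope_def_field, le_div_iff₀ (sub_pos.2 hxy)] at this
    linarith
  · simp
  · have := hf.slope_le_of_hasDerivAt hy hx hyx hder
    rw [slope_def_field, div_le_iff₀ (sub_pos.2 hyx)] at this
    linarith

lemma IsMinOn.deriv_mul_sub_nonneg {s : Set ℝ} {f : ℝ → ℝ} {f' x y : ℝ} (hs : Convex ℝ s)
    (hmin : IsMinOn f s x) (hder : HasDerivAt f f' x) (hx : x ∈ s) (hy : y ∈ s) :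
    0 ≤ f' * (y - x) := by
  have := hmin.localize.hasFDerivWithinAt_nonneg hder.hasFDerivAt.hasFDerivWithinAt
    (sub_mem_posTangentConeAt_of_segment_subset (hs.segment_subset hx hy))
  simpa [mul_comm] using this

lemma measurable_of_forall_hasDerivAt {f f' : ℝ → ℝ} (h : ∀ x, HasDerivAt f (f' x) x) :
    Measurable f' := by
  rw [show f' = deriv f from funext fun x => (h x).deriv.symm]
  exact measurable_deriv f

lemma abs_le_div_sqrt_of_mul_sq_le {κ r t : ℝ} (hκ : 0 < κ) (hr : 0 ≤ r)
    (h : κ * t ^ 2 ≤ r ^ 2 / 2) : |t| ≤ r / √(2 * κ) := by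
  rw [le_div_iff₀ (by positivity), ← Real.sqrt_sq_eq_abs, ← Real.sqrt_mul' _ (by positivity),
    ← Real.sqrt_sq hr]
  exact Real.sqrt_le_sqrt (by linarith)

section Bregman

variable {ψ ψ' : ℝ → ℝ}

lemma bregman_three_point (x y z : ℝ) :
    (ψ' y - ψ' x) * (z - y) = bregman ψ ψ' z x - bregman ψ ψ' z y - bregman ψ ψ' y x := by
  unfold bregman; ring

lemma hasDerivAt_bregman_left (hψ : ∀ x, HasDerivAt ψ (ψ' x) x) (x y : ℝ) :
    HasDerivAt (fun z => bregman ψ ψ' z x) (ψ' y - ψ' x) y :=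
  (((hψ y).sub_const (ψ x)).sub
      (((hasDerivAt_id' y).sub_const x).const_mul (ψ' x))).congr_deriv (by ring)

lemma bregman_prox_le {Θ : Set ℝ} (hΘ : Convex ℝ Θ) (hψ : ∀ x, HasDerivAt ψ (ψ' x) x)
    {a g x x' z : ℝ} (ha : 0 < a) (hx' : x' ∈ Θ) (hz : z ∈ Θ)
    (hmin : IsMinOn (fun y => g * y + bregman ψ ψ' y x / a) Θ x') :
    a * g * (x' - z) ≤ bregman ψ ψ' z x - bregman ψ ψ' z x' - bregman ψ ψ' x' x := by
  have hder : HasDerivAt (fun y => g * y + bregman ψ ψ' y x / a)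
      (g + (ψ' x' - ψ' x) / a) x' :=
    (((hasDerivAt_id' x').const_mul g).add
      ((hasDerivAt_bregman_left hψ x x').div_const a)).congr_deriv (by ring)
  have hopt := mul_nonneg ha.le (hmin.deriv_mul_sub_nonneg hΘ hder hx' hz)
  have : a * ((g + (ψ' x' - ψ' x) / a) * (z - x')) =
      a * g * (z - x') + (ψ' x' - ψ' x) * (z - x') := by field_simp
  linarith [bregman_three_point (ψ := ψ) (ψ' := ψ') x x' z]

lemma mirror_step_le {Θ : Set ℝ} (hΘ : Convex ℝ Θ) (hψ : ∀ x, HasDerivAt ψ (ψ' x) x)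
    {J : ℝ → ℝ} (hJ : ConvexOn ℝ Θ J) {κ a g j x x' z : ℝ} (hκ : 0 < κ) (ha : 0 < a)
    (hx : x ∈ Θ) (hx' : x' ∈ Θ) (hz : z ∈ Θ) (hJx : HasDerivAt J j x)
    (hstrong : κ * (x' - x) ^ 2 ≤ bregman ψ ψ' x' x)
    (hmin : IsMinOn (fun y => g * y + bregman ψ ψ' y x / a) Θ x') :
    J x - J z ≤ (bregman ψ ψ' z x - bregman ψ ψ' z x') / a + a * g ^ 2 / (4 * κ)
      + (x - z) * (j - g) := by
  have hprox := bregman_prox_le hΘ hψ ha hx' hz hmin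
  have htangent := hJ.add_deriv_mul_sub_le hx hz hJx
  -- Young's inequality, with the strong convexity of `ψ` absorbing the quadratic term
  have hyoung : a * g * (x - x') ≤ κ * (x' - x) ^ 2 + a ^ 2 * g ^ 2 / (4 * κ) := by
    have : κ * (x' - x) ^ 2 + a ^ 2 * g ^ 2 / (4 * κ) - a * g * (x - x')
        = (2 * κ * (x - x') - a * g) ^ 2 / (4 * κ) := by field_simp; ring
    nlinarith [show 0 ≤ (2 * κ * (x - x') - a * g) ^ 2 / (4 * κ) by positivity]
  have : (bregman ψ ψ' z x - bregman ψ ψ' z x') / a + a * g ^ 2 / (4 * κ) + (x - z) * (j - g)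
      = (bregman ψ ψ' z x - bregman ψ ψ' z x' + a ^ 2 * g ^ 2 / (4 * κ)
          + a * (j - g) * (x - z)) / a := by field_simp
  rw [this, le_div_iff₀ ha]
  nlinarith

end Bregman

section Probability

variable {Ω : Type*} {m m₀ : MeasurableSpace Ω} {μ : Measure[m₀] Ω}

lemma integral_mem_Icc_of_ae_mem_Icc [IsProbabilityMeasure μ] {f : Ω → ℝ} {C : ℝ}
    (hf : ∀ᵐ ω ∂μ, f ω ∈ Set.Icc 0 C) : ∫ ω, f ω ∂μ ∈ Set.Icc 0 C := by
  refine ⟨integral_nonneg_of_ae (hf.mono fun _ h => h.1), ?_⟩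
  calc ∫ ω, f ω ∂μ ≤ ∫ _, C ∂μ :=
        integral_mono_of_nonneg (hf.mono fun _ h => h.1) (integrable_const C)
          (hf.mono fun _ h => h.2)
    _ = C := by simp

lemma integrable_comp_of_ae_mem [IsFiniteMeasure μ] {F : ℝ → ℝ} {X : Ω → ℝ} {s : Set ℝ}
    {C : ℝ} (hF : Measurable F) (hX : Measurable X) (hXs : ∀ᵐ ω ∂μ, X ω ∈ s)
    (hFs : ∀ y ∈ s, ‖F y‖ ≤ C) : Integrable (fun ω => F (X ω)) μ :=
  (integrable_const C).mono' (hF.comp hX).aestronglyMeasurable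
    (hXs.mono fun _ hω => hFs _ hω)

lemma integral_mul_sub_le_of_condExp_ae_eq [IsProbabilityMeasure μ] (hm : m ≤ m₀)
    {g h u Δ : Ω → ℝ} {R β : ℝ} (hg : StronglyMeasurable[m] g) (hgR : ∀ᵐ ω ∂μ, |g ω| ≤ R)
    (hh : Integrable h μ) (hu : Integrable u μ)
    (hbias : μ[h | m] =ᵐ[μ] fun ω => u ω + Δ ω) (hΔ : ∀ᵐ ω ∂μ, |Δ ω| ≤ β) :
    ∫ ω, g ω * (u ω - h ω) ∂μ ≤ R * β := by
  have hgm : AEStronglyMeasurable g μ := (hg.mono hm).aestronglyMeasurable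
  have hgR' : ∀ᵐ ω ∂μ, ‖g ω‖ ≤ R := hgR
  have hgh : Integrable (fun ω => g ω * h ω) μ := hh.bdd_mul hgm hgR'
  have hgM : Integrable (fun ω => g ω * μ[h | m] ω) μ := integrable_condExp.bdd_mul hgm hgR'
  have hgu : Integrable (fun ω => g ω * u ω) μ := hu.bdd_mul hgm hgR'
  have hpull : ∫ ω, g ω * h ω ∂μ = ∫ ω, g ω * μ[h | m] ω ∂μ := by
    rw [← integral_condExp hm]
    exact integral_congr_ae (condExp_stronglyMeasurable_mul_of_bound hm hg hh R hgR')
  calc ∫ ω, g ω * (u ω - h ω) ∂μ = ∫ ω, (g ω * u ω - g ω * μ[h | m] ω) ∂μ := by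
        simp only [mul_sub]
        rw [integral_sub hgu hgh, integral_sub hgu hgM, hpull]
    _ ≤ ∫ _, R * β ∂μ := by
        refine integral_mono_ae (hgu.sub hgM) (integrable_const _) ?_
        filter_upwards [hbias, hgR, hΔ] with ω hM hgω hΔω
        rw [hM, ← mul_sub, sub_add_cancel_left, mul_neg]
        calc -(g ω * Δ ω) ≤ |g ω| * |Δ ω| := by rw [← abs_mul]; exact neg_le_abs _
          _ ≤ R * β := mul_le_mul hgω hΔω (abs_nonneg _) ((abs_nonneg _).trans hgω)
    _ = R * β := by simp

lemma integral_sq_le_of_condVar_le [IsProbabilityMeasure μ] (hm : m ≤ m₀) {X : Ω → ℝ}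
    {c B : ℝ} (hX : MemLp X 2 μ) (hvar : ∀ᵐ ω ∂μ, Var[X; μ | m] ω ≤ c)
    (hB : ∀ᵐ ω ∂μ, |μ[X | m] ω| ≤ B) : ∫ ω, X ω ^ 2 ∂μ ≤ c + B ^ 2 := by
  calc ∫ ω, X ω ^ 2 ∂μ = ∫ ω, μ[X ^ 2 | m] ω ∂μ := (integral_condExp hm).symm
    _ = ∫ ω, (Var[X; μ | m] ω + μ[X | m] ω ^ 2) ∂μ := by
        refine integral_congr_ae ?_
        filter_upwards [condVar_ae_eq_condExp_sq_sub_sq_condExp hm hX] with ω hω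
        simp [hω]
    _ ≤ ∫ _, (c + B ^ 2) ∂μ := by
        refine integral_mono_ae
          (integrable_condVar.add (hX.condExp one_le_two).integrable_sq) (integrable_const _) ?_
        filter_upwards [hvar, hB] with ω hvω hBω
        have := pow_le_pow_left₀ (abs_nonneg _) hBω 2
        rw [sq_abs] at this
        exact add_le_add hvω this
    _ = c + B ^ 2 := by simp

lemma integral_comp_sum_div_card_le [IsProbabilityMeasure μ] {Θ : Set ℝ} (hΘcp : IsCompact Θ)
    (hΘcv : Convex ℝ Θ) {F : ℝ → ℝ} (hFc : Continuous F) (hF : ConvexOn ℝ Θ F)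
    {X : ℕ → Ω → ℝ} (hX : ∀ i, Measurable (X i)) (hXΘ : ∀ i, ∀ᵐ ω ∂μ, X i ω ∈ Θ)
    {s : Finset ℕ} (hs : s.Nonempty) :
    ∫ ω, F ((∑ i ∈ s, X i ω) / #s) ∂μ ≤ (∑ i ∈ s, ∫ ω, F (X i ω) ∂μ) / #s := by
  obtain ⟨C, hC⟩ := hΘcp.exists_bound_of_continuousOn hFc.continuousOn
  have hw : ∑ _ ∈ s, (#s : ℝ)⁻¹ = 1 := by simp [hs.card_ne_zero]
  have havg : ∀ ω, (∑ i ∈ s, X i ω) / #s = ∑ i ∈ s, (#s : ℝ)⁻¹ • X i ω := fun ω => by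
    simp [div_eq_inv_mul, mul_sum]
  have hall : ∀ᵐ ω ∂μ, ∀ i ∈ s, X i ω ∈ Θ := (ae_ball_iff s.countable_toSet).2 fun i _ => hXΘ i
  have hmem : ∀ᵐ ω ∂μ, (∑ i ∈ s, X i ω) / #s ∈ Θ := hall.mono fun ω hω => by
    rw [havg]; exact hΘcv.sum_mem (fun _ _ => by positivity) hw hω
  have hint : ∀ i, Integrable (fun ω => F (X i ω)) μ := fun i =>
    integrable_comp_of_ae_mem hFc.measurable (hX i) (hXΘ i) hC
  calc ∫ ω, F ((∑ i ∈ s, X i ω) / #s) ∂μ ≤ ∫ ω, (∑ i ∈ s, F (X i ω)) / #s ∂μ := by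
        refine integral_mono_ae (integrable_comp_of_ae_mem hFc.measurable
          ((Finset.measurable_sum _ fun i _ => hX i).div_const _) hmem hC)
          ((integrable_finsetSum _ fun i _ => hint i).div_const _) ?_
        filter_upwards [hall] with ω hω
        rw [havg, sum_div]
        simpa [div_eq_inv_mul] using hF.map_sum_le (fun _ _ => by positivity) hw hω
    _ = (∑ i ∈ s, ∫ ω, F (X i ω) ∂μ) / #s := by
        rw [integral_div, integral_finsetSum _ fun i _ => hint i]

lemma integral_mirror_step_le_of_moments [IsProbabilityMeasure μ] {Θ : Set ℝ}
    (hΘcp : IsCompact Θ) (hΘcv : Convex ℝ Θ) {J J' : ℝ → ℝ} (hJconv : ConvexOn ℝ Θ J)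
    (hJ : ∀ x, HasDerivAt J (J' x) x) {θstar : ℝ} (hθstar : θstar ∈ Θ) {ψ ψ' : ℝ → ℝ}
    (hψ : ∀ x, HasDerivAt ψ (ψ' x) x) {κ C : ℝ} (hκ : 0 < κ)
    (hD_lower : ∀ x ∈ Θ, ∀ y ∈ Θ, κ * (x - y) ^ 2 ≤ bregman ψ ψ' x y)
    (hD_upper : ∀ x ∈ Θ, bregman ψ ψ' θstar x ≤ C)
    {a G E : ℝ} (ha : 0 < a) {x x' g : Ω → ℝ} (hx : Measurable x) (hx' : Measurable x')
    (hxΘ : ∀ᵐ ω ∂μ, x ω ∈ Θ) (hx'Θ : ∀ᵐ ω ∂μ, x' ω ∈ Θ) (hg : MemLp g 2 μ)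
    (hcrossint : Integrable (fun ω => (x ω - θstar) * (J' (x ω) - g ω)) μ)
    (hupdate : ∀ᵐ ω ∂μ, IsMinOn (fun y => g ω * y + bregman ψ ψ' y (x ω) / a) Θ (x' ω))
    (hsq : ∫ ω, g ω ^ 2 ∂μ ≤ G) (hcross : ∫ ω, (x ω - θstar) * (J' (x ω) - g ω) ∂μ ≤ E) :
    ∫ ω, (J (x ω) - J θstar) ∂μ ≤
      (∫ ω, bregman ψ ψ' θstar (x ω) ∂μ - ∫ ω, bregman ψ ψ' θstar (x' ω) ∂μ) / a
        + a * G / (4 * κ) + E := by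
  have hJc : Continuous J := continuous_iff_continuousAt.2 fun y => (hJ y).continuousAt
  have hψc : Continuous ψ := continuous_iff_continuousAt.2 fun y => (hψ y).continuousAt
  have hDm : Measurable (bregman ψ ψ' θstar) :=
    (measurable_const.sub hψc.measurable).sub
      ((measurable_of_forall_hasDerivAt hψ).mul (measurable_const.sub measurable_id))
  have hDΘ : ∀ y ∈ Θ, ‖bregman ψ ψ' θstar y‖ ≤ C := fun y hy => by
    rw [Real.norm_of_nonneg ((by positivity : 0 ≤ κ * (θstar - y) ^ 2).trans
      (hD_lower _ hθstar _ hy))]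
    exact hD_upper y hy
  obtain ⟨CJ, hJΘ⟩ := hΘcp.exists_bound_of_continuousOn hJc.continuousOn
  have hJint := integrable_comp_of_ae_mem hJc.measurable hx hxΘ hJΘ
  have hDint := integrable_comp_of_ae_mem hDm hx hxΘ hDΘ
  have hD'int := integrable_comp_of_ae_mem hDm hx' hx'Θ hDΘ
  have hI₁ : Integrable
      (fun ω => (bregman ψ ψ' θstar (x ω) - bregman ψ ψ' θstar (x' ω)) / a) μ :=
    (hDint.sub hD'int).div_const a
  have hI₂ : Integrable (fun ω => a * g ω ^ 2 / (4 * κ)) μ :=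
    (hg.integrable_sq.const_mul a).div_const (4 * κ)
  have hI₁₂ : Integrable (fun ω => (bregman ψ ψ' θstar (x ω) - bregman ψ ψ' θstar (x' ω)) / a
      + a * g ω ^ 2 / (4 * κ)) μ := hI₁.add hI₂
  have hpoint : ∀ᵐ ω ∂μ, J (x ω) - J θstar ≤
      (bregman ψ ψ' θstar (x ω) - bregman ψ ψ' θstar (x' ω)) / a + a * g ω ^ 2 / (4 * κ)
        + (x ω - θstar) * (J' (x ω) - g ω) := by
    filter_upwards [hxΘ, hx'Θ, hupdate] with ω hω hω' hmin
    exact mirror_step_le hΘcv hψ hJconv hκ ha hω hω' hθstar (hJ _) (hD_lower _ hω' _ hω) hmin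
  calc ∫ ω, (J (x ω) - J θstar) ∂μ
      ≤ ∫ ω, ((bregman ψ ψ' θstar (x ω) - bregman ψ ψ' θstar (x' ω)) / a
          + a * g ω ^ 2 / (4 * κ) + (x ω - θstar) * (J' (x ω) - g ω)) ∂μ :=
        integral_mono_ae (hJint.sub (integrable_const _)) (hI₁₂.add hcrossint) hpoint
    _ = (∫ ω, bregman ψ ψ' θstar (x ω) ∂μ - ∫ ω, bregman ψ ψ' θstar (x' ω) ∂μ) / a
          + a * (∫ ω, g ω ^ 2 ∂μ) / (4 * κ)
          + ∫ ω, (x ω - θstar) * (J' (x ω) - g ω) ∂μ := by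
        rw [integral_add hI₁₂ hcrossint, integral_add hI₁ hI₂, integral_div,
          integral_sub hDint hD'int, integral_div, integral_const_mul]
    _ ≤ _ := by gcongr

lemma integral_mirror_step_le [IsProbabilityMeasure μ] (hm : m ≤ m₀) {Θ : Set ℝ}
    (hΘcp : IsCompact Θ) (hΘcv : Convex ℝ Θ) {J J' : ℝ → ℝ} (hJconv : ConvexOn ℝ Θ J)
    (hJ : ∀ x, HasDerivAt J (J' x) x) {θstar : ℝ} (hθstar : θstar ∈ Θ) {ψ ψ' : ℝ → ℝ}
    (hψ : ∀ x, HasDerivAt ψ (ψ' x) x) {κ r : ℝ} (hκ : 0 < κ) (hr : 0 ≤ r)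
    (hD_lower : ∀ x ∈ Θ, ∀ y ∈ Θ, κ * (x - y) ^ 2 ≤ bregman ψ ψ' x y)
    (hD_upper : ∀ x ∈ Θ, bregman ψ ψ' θstar x ≤ r ^ 2 / 2)
    {K : ℝ} (hK : 0 ≤ K) (hJ'bound : ∀ x ∈ Θ, |J' x| ≤ K * |x - θstar|)
    {a β c : ℝ} (ha : 0 < a) {x x' g Δ : Ω → ℝ} (hx : StronglyMeasurable[m] x)
    (hx' : Measurable x') (hxΘ : ∀ᵐ ω ∂μ, x ω ∈ Θ) (hx'Θ : ∀ᵐ ω ∂μ, x' ω ∈ Θ) (hg : MemLp g 2 μ)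
    (hupdate : ∀ᵐ ω ∂μ, IsMinOn (fun y => g ω * y + bregman ψ ψ' y (x ω) / a) Θ (x' ω))
    (hbias : μ[g | m] =ᵐ[μ] fun ω => J' (x ω) + Δ ω) (hΔ : ∀ᵐ ω ∂μ, |Δ ω| ≤ β)
    (hvar : ∀ᵐ ω ∂μ, Var[g; μ | m] ω ≤ c) :
    ∫ ω, (J (x ω) - J θstar) ∂μ ≤
      (∫ ω, bregman ψ ψ' θstar (x ω) ∂μ - ∫ ω, bregman ψ ψ' θstar (x' ω) ∂μ) / a
        + a * (c + 2 * (K * (r / √(2 * κ))) ^ 2 + 2 * β ^ 2) / (4 * κ)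
        + r / √(2 * κ) * β := by
  set R := r / √(2 * κ)
  have hxm : Measurable x := (hx.mono hm).measurable
  have hdistΘ : ∀ y ∈ Θ, |y - θstar| ≤ R := fun y hy => (abs_sub_comm _ _).trans_le <|
    abs_le_div_sqrt_of_mul_sq_le hκ hr ((hD_lower _ hθstar _ hy).trans (hD_upper _ hy))
  have hdist : ∀ᵐ ω ∂μ, |x ω - θstar| ≤ R := hxΘ.mono fun ω hω => hdistΘ _ hω
  have hJ'Θ : ∀ y ∈ Θ, ‖J' y‖ ≤ K * R := fun y hy =>
    (hJ'bound y hy).trans (mul_le_mul_of_nonneg_left (hdistΘ y hy) hK)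
  have hJ'int := integrable_comp_of_ae_mem (measurable_of_forall_hasDerivAt hJ) hxm hxΘ hJ'Θ
  have hgint : Integrable g μ := hg.integrable one_le_two
  have hbound : ∀ᵐ ω ∂μ, |μ[g | m] ω| ≤ K * R + β := by
    filter_upwards [hbias, hxΘ, hΔ] with ω hM hω hΔω
    rw [hM]
    exact (abs_add_le _ _).trans (add_le_add (hJ'Θ _ hω) hΔω)
  refine integral_mirror_step_le_of_moments hΘcp hΘcv hJconv hJ hθstar hψ hκ hD_lower hD_upper
    ha hxm hx' hxΘ hx'Θ hg
    ((hJ'int.sub hgint).bdd_mul (hxm.sub measurable_const).aestronglyMeasurable hdist) hupdate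
    ?_ (integral_mul_sub_le_of_condExp_ae_eq hm (hx.sub stronglyMeasurable_const) hdist hgint
      hJ'int hbias hΔ)
  exact (integral_sq_le_of_condVar_le hm hg hvar hbound).trans
    (by linarith [add_sq_le (a := K * R) (b := β)])

end Probability

lemma sum_Icc_inv_sqrt_le (n : ℕ) : ∑ i ∈ Icc 1 n, (√(i : ℝ))⁻¹ ≤ 2 * √n := by
  induction n with
  | zero => simp
  | succ n ih =>
    rw [sum_Icc_succ_top (by omega)]
    have hn : (0 : ℝ) < n + 1 := by positivity
    have hprod : 2 * √n * √(n + 1) ≤ 2 * n + 1 := by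
      nlinarith [sq_nonneg (√n - √(n + 1)), Real.sq_sqrt (n.cast_nonneg (α := ℝ)),
        Real.sq_sqrt hn.le]
    have : (√((n : ℝ) + 1))⁻¹ ≤ 2 * √(n + 1) - 2 * √n := by
      rw [inv_le_iff_one_le_mul₀' (Real.sqrt_pos.2 hn)]
      nlinarith [Real.sq_sqrt hn.le]
    push_cast
    linarith

lemma sum_Icc_inv_sq_le (n : ℕ) : ∑ i ∈ Icc 1 n, ((i : ℝ) ^ 2)⁻¹ ≤ 2 := by
  have : Icc 1 n = Ioo 0 (n + 1) := by ext; simp; omega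
  simpa [this] using sum_Ioo_inv_sq_le (α := ℝ) 0 (n + 1)

lemma sum_Icc_sub_div_le {a e : ℕ → ℝ} {B : ℝ} (ha : ∀ i, 1 ≤ i → 0 < a i)
    (hanti : ∀ i, 1 ≤ i → a (i + 1) ≤ a i) (he : ∀ i, e i ∈ Set.Icc 0 B) {n : ℕ} (hn : 1 ≤ n) :
    ∑ i ∈ Icc 1 n, (e i - e (i + 1)) / a i ≤ B / a n := by
  suffices ∑ i ∈ Icc 1 n, (e i - e (i + 1)) / a i ≤ (B - e (n + 1)) / a n from
    this.trans (div_le_div_of_nonneg_right (by linarith [(he (n + 1)).1]) (ha n hn).le)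
  induction n, hn using Nat.le_induction with
  | base => simp [div_le_div_iff_of_pos_right (ha 1 le_rfl), (he 1).2]
  | succ n hn ih =>
    rw [sum_Icc_succ_top (by omega)]
    -- summation by parts: the weights `1 / a i` increase while `B - e (n + 1) ≥ 0`
    have hmono : (B - e (n + 1)) / a n ≤ (B - e (n + 1)) / a (n + 1) :=
      div_le_div_of_nonneg_left (by linarith [(he (n + 1)).2]) (ha _ (by omega)) (hanti n hn)
    have : (B - e (n + 1)) / a (n + 1) + (e (n + 1) - e (n + 1 + 1)) / a (n + 1)
        = (B - e (n + 1 + 1)) / a (n + 1) := by ring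
    linarith

lemma sum_mirror_schedule_le {a₀ d₀ B P Q S : ℝ} (ha₀ : 0 < a₀) (hP : 0 ≤ P) (hQ : 0 ≤ Q)
    (hS : 0 ≤ S) {a δ e x : ℕ → ℝ} (ha : ∀ i : ℕ, a i = a₀ * (i : ℝ) ^ (-(1 : ℝ) / 2))
    (hδ : ∀ i : ℕ, δ i = d₀ * (i : ℝ)⁻¹) (he : ∀ i, e i ∈ Set.Icc 0 B)
    (hx : ∀ i, 1 ≤ i →
      x i ≤ (e i - e (i + 1)) / a i + a i * (P + Q * δ i ^ 4) + S * δ i ^ 2)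
    {n : ℕ} (hn : 1 ≤ n) :
    ∑ i ∈ Icc 1 n, x i ≤ (B / a₀ + 2 * a₀ * P) * √n + 2 * (a₀ * Q * d₀ ^ 4 + S * d₀ ^ 2) := by
  have ha' : ∀ i : ℕ, a i = a₀ / √i := fun i => by
    rw [ha, neg_div, Real.rpow_neg i.cast_nonneg, ← Real.sqrt_eq_rpow, div_eq_mul_inv]
  have ha_pos : ∀ i, 1 ≤ i → 0 < a i := fun i hi => by
    rw [ha']; have : (0 : ℝ) < i := by exact_mod_cast hi
    positivity
  have hanti : ∀ i, 1 ≤ i → a (i + 1) ≤ a i := fun i hi => by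
    rw [ha', ha']; have : (0 : ℝ) < i := by exact_mod_cast hi
    gcongr; linarith
  have hterm : ∀ i ∈ Icc 1 n, a i * (P + Q * δ i ^ 4) + S * δ i ^ 2
      ≤ a₀ * P * (√(i : ℝ))⁻¹ + (a₀ * Q * d₀ ^ 4 + S * d₀ ^ 2) * ((i : ℝ) ^ 2)⁻¹ := by
    intro i hi
    have hi : (1 : ℝ) ≤ i := by exact_mod_cast (mem_Icc.1 hi).1
    have hsqrt : 1 ≤ √(i : ℝ) := Real.one_le_sqrt.2 hi
    have : a i * (P + Q * δ i ^ 4) + S * δ i ^ 2 = a₀ * P * (√(i : ℝ))⁻¹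
        + (a₀ * Q * d₀ ^ 4 * ((√(i : ℝ))⁻¹ * ((i : ℝ) ^ 2)⁻¹) + S * d₀ ^ 2) * ((i : ℝ) ^ 2)⁻¹ := by
      rw [ha', hδ]; field_simp; ring
    have hsmall : (√(i : ℝ))⁻¹ * ((i : ℝ) ^ 2)⁻¹ ≤ 1 :=
      mul_le_one₀ (inv_le_one_of_one_le₀ hsqrt) (by positivity)
        (inv_le_one_of_one_le₀ (one_le_pow₀ hi))
    rw [this]
    gcongr _ + (?_ + _) * _
    exact mul_le_of_le_one_right (by positivity) hsmall
  calc ∑ i ∈ Icc 1 n, x i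
      ≤ ∑ i ∈ Icc 1 n, ((e i - e (i + 1)) / a i + (a i * (P + Q * δ i ^ 4) + S * δ i ^ 2)) :=
        sum_le_sum fun i hi => by linarith [hx i (mem_Icc.1 hi).1]
    _ ≤ B / a n + (a₀ * P * (2 * √n) + (a₀ * Q * d₀ ^ 4 + S * d₀ ^ 2) * 2) := by
        rw [sum_add_distrib]
        gcongr
        · exact sum_Icc_sub_div_le ha_pos hanti he hn
        · refine (sum_le_sum hterm).trans ?_
          rw [sum_add_distrib, ← mul_sum, ← mul_sum]
          gcongr
          · exact sum_Icc_inv_sqrt_le n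
          · exact sum_Icc_inv_sq_le n
    _ = (B / a₀ + 2 * a₀ * P) * √n + 2 * (a₀ * Q * d₀ ^ 4 + S * d₀ ^ 2) := by
        have : (0 : ℝ) < √n := Real.sqrt_pos.2 (by exact_mod_cast hn)
        rw [ha']; field_simp; ring

lemma mirror_descent_rate_le {a₀ b c d₀ κ K r : ℝ} (ha₀ : 0 < a₀) (hc : 0 ≤ c)
    (hκ : 0 < κ) {n : ℝ} (hn : 0 < n) :
    ((r ^ 2 / 2 / a₀ + 2 * a₀ * ((c + 2 * (K * (r / √(2 * κ))) ^ 2) / (4 * κ))) * √n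
        + 2 * (a₀ * (b ^ 2 / (2 * κ)) * d₀ ^ 4 + r / √(2 * κ) * b * d₀ ^ 2)) / n
      ≤ (r ^ 2 / 2 + 2 * (c / (2 * κ)) + 2 * (K ^ 2 * r ^ 2 / (2 * κ ^ 2))) * max a₀ a₀⁻¹ / √n
        + (9 / 7) * (b ^ 2 / κ) * d₀ ^ 4 * a₀ / n + 2 * (b * r / √(2 * κ)) * d₀ ^ 2 / n := by
  set M := max a₀ a₀⁻¹
  have hsqrt : 0 < √n := Real.sqrt_pos.2 hn
  have hA : 0 ≤ c / (2 * κ) + K ^ 2 * r ^ 2 / (2 * κ ^ 2) := by positivity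
  have hcoef : r ^ 2 / 2 / a₀ + 2 * a₀ * ((c + 2 * (K * (r / √(2 * κ))) ^ 2) / (4 * κ))
      ≤ (r ^ 2 / 2 + 2 * (c / (2 * κ)) + 2 * (K ^ 2 * r ^ 2 / (2 * κ ^ 2))) * M := by
    have : 2 * a₀ * ((c + 2 * (K * (r / √(2 * κ))) ^ 2) / (4 * κ))
        = (c / (2 * κ) + K ^ 2 * r ^ 2 / (2 * κ ^ 2)) * a₀ := by
      rw [mul_pow, div_pow, Real.sq_sqrt (by positivity)]; field_simp; ring
    rw [this, div_eq_mul_inv _ a₀]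
    have h₁ : a₀⁻¹ ≤ M := le_max_right _ _
    have h₂ : a₀ ≤ M := le_max_left _ _
    nlinarith [mul_le_mul_of_nonneg_left h₁ (by positivity : (0 : ℝ) ≤ r ^ 2 / 2),
      mul_le_mul_of_nonneg_left h₂ hA, mul_nonneg hA (ha₀.le.trans h₂)]
  have hconst : 2 * (a₀ * (b ^ 2 / (2 * κ)) * d₀ ^ 4 + r / √(2 * κ) * b * d₀ ^ 2)
      ≤ (9 / 7) * (b ^ 2 / κ) * d₀ ^ 4 * a₀ + 2 * (b * r / √(2 * κ)) * d₀ ^ 2 := by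
    have : 0 ≤ b ^ 2 / κ * d₀ ^ 4 * a₀ := by positivity
    have : 2 * (a₀ * (b ^ 2 / (2 * κ)) * d₀ ^ 4) = b ^ 2 / κ * d₀ ^ 4 * a₀ := by
      field_simp
    have : r / √(2 * κ) * b = b * r / √(2 * κ) := by ring
    nlinarith
  calc _ = (r ^ 2 / 2 / a₀ + 2 * a₀ * ((c + 2 * (K * (r / √(2 * κ))) ^ 2) / (4 * κ))) / √n
        + 2 * (a₀ * (b ^ 2 / (2 * κ)) * d₀ ^ 4 + r / √(2 * κ) * b * d₀ ^ 2) / n := by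
        have : √n / n = 1 / √n := by
          rw [div_eq_div_iff hn.ne' hsqrt.ne', one_mul, Real.mul_self_sqrt hn.le]
        rw [add_div, mul_div_assoc, this, mul_one_div]
    _ ≤ (r ^ 2 / 2 + 2 * (c / (2 * κ)) + 2 * (K ^ 2 * r ^ 2 / (2 * κ ^ 2))) * M / √n
        + ((9 / 7) * (b ^ 2 / κ) * d₀ ^ 4 * a₀ + 2 * (b * r / √(2 * κ)) * d₀ ^ 2) / n := by
        gcongr
    _ = _ := by rw [add_div, ← add_assoc]

theorem md_corollary3b_general
    {Ω : Type*} {m0 : MeasurableSpace Ω} {μ : Measure Ω} [IsProbabilityMeasure μ]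
    (ℱ : ℕ → MeasurableSpace Ω) (hℱ_le : ∀ n, ℱ n ≤ m0)
    (Θ : Set ℝ) (hΘcp : IsCompact Θ) (hΘcv : Convex ℝ Θ)
    (J J' : ℝ → ℝ) (hJconv : ConvexOn ℝ Set.univ J)
    (hJ : ∀ x, HasDerivAt J (J' x) x)
    (θstar : ℝ) (hθstar : θstar ∈ Θ)
    (ψ ψ' : ℝ → ℝ) (hψ : ∀ x, HasDerivAt ψ (ψ' x) x)
    (κ r : ℝ) (hκ : 0 < κ) (hr : 0 < r)
    (hD_lower : ∀ x ∈ Θ, ∀ y ∈ Θ,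
      κ * (x - y) ^ 2 ≤ ψ x - ψ y - ψ' y * (x - y))
    (hD_upper : ∀ x ∈ Θ, ψ θstar - ψ x - ψ' x * (θstar - x) ≤ r ^ 2 / 2)
    (K₁ K₂ : ℝ) (hK₁ : 0 < K₁) (hK₁₂ : K₁ ≤ K₂)
    (hJ'bound : ∀ x ∈ Θ, K₁ * |x - θstar| ≤ |J' x| ∧ |J' x| ≤ K₂ * |x - θstar|)
    (a₀ d₀ : ℝ) (ha₀ : 0 < a₀)
    (a δ : ℕ → ℝ)
    (ha : ∀ n : ℕ, a n = a₀ * (n : ℝ) ^ (-(1 : ℝ) / 2))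
    (hδ : ∀ n : ℕ, δ n = d₀ * (n : ℝ)⁻¹)
    (b c : ℝ) (hb : 0 ≤ b) (hc : 0 ≤ c)
    (θ h Δ : ℕ → Ω → ℝ)
    (hθmeas : ∀ n, StronglyMeasurable[ℱ n] (θ n))
    (hhL2 : ∀ n, MemLp (h n) 2 μ)
    (hθΘ : ∀ n, ∀ᵐ ω ∂μ, θ n ω ∈ Θ)
    (hupdate : ∀ n : ℕ, 1 ≤ n → ∀ᵐ ω ∂μ,
      IsMinOn (fun x : ℝ => h n ω * x +
        (ψ x - ψ (θ n ω) - ψ' (θ n ω) * (x - θ n ω)) / a n) Θ (θ (n + 1) ω))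
    (hbias : ∀ n : ℕ, 1 ≤ n →
      μ[h n | ℱ n] =ᵐ[μ] fun ω => J' (θ n ω) + Δ n ω)
    (hΔ : ∀ n : ℕ, 1 ≤ n → ∀ᵐ ω ∂μ, |Δ n ω| ≤ b * δ n ^ 2)
    (hvar : ∀ n : ℕ, 1 ≤ n → ∀ᵐ ω ∂μ,
      (μ[fun ω' => (h n ω' - (μ[h n | ℱ n]) ω') ^ 2 | ℱ n]) ω ≤ c) :
    ∀ n : ℕ, 1 ≤ n →
      ∫ ω, (J ((∑ i ∈ Finset.Icc 1 n, θ i ω) / n) - J θstar) ∂μ ≤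
        (r ^ 2 / 2 + 2 * (c / (2 * κ)) + 2 * (K₂ ^ 2 * r ^ 2 / (2 * κ ^ 2)))
            * max a₀ a₀⁻¹ / Real.sqrt n
        + (9 / 7) * (b ^ 2 / κ) * d₀ ^ 4 * a₀ / n
        + 2 * (b * r / Real.sqrt (2 * κ)) * d₀ ^ 2 / n := by
  intro n hn
  have hθm : ∀ i, Measurable (θ i) := fun i => ((hθmeas i).mono (hℱ_le i)).measurable
  have hJc : Continuous J := continuous_iff_continuousAt.2 fun y => (hJ y).continuousAt
  have hJΘ : ConvexOn ℝ Θ J := hJconv.subset (Set.subset_univ Θ) hΘcv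
  have ha_pos : ∀ i, 1 ≤ i → 0 < a i := fun i hi => by
    rw [ha]; exact mul_pos ha₀ (Real.rpow_pos_of_pos (by exact_mod_cast hi) _)
  set R := r / √(2 * κ)
  set e : ℕ → ℝ := fun i => ∫ ω, bregman ψ ψ' θstar (θ i ω) ∂μ
  have he : ∀ i, e i ∈ Set.Icc 0 (r ^ 2 / 2) := fun i => integral_mem_Icc_of_ae_mem_Icc <|
    (hθΘ i).mono fun ω hω => ⟨(by positivity : 0 ≤ κ * (θstar - θ i ω) ^ 2).trans
      (hD_lower _ hθstar _ hω), hD_upper _ hω⟩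
  have hstep : ∀ i, 1 ≤ i → ∫ ω, (J (θ i ω) - J θstar) ∂μ ≤ (e i - e (i + 1)) / a i
      + a i * ((c + 2 * (K₂ * R) ^ 2) / (4 * κ) + b ^ 2 / (2 * κ) * δ i ^ 4) + R * b * δ i ^ 2 :=
    fun i hi => (integral_mirror_step_le (hℱ_le i) hΘcp hΘcv hJΘ hJ hθstar hψ hκ hr.le hD_lower
      hD_upper (hK₁.le.trans hK₁₂) (fun x hx => (hJ'bound x hx).2) (ha_pos i hi) (hθmeas i)
      (hθm (i + 1)) (hθΘ i) (hθΘ (i + 1)) (hhL2 i) (hupdate i hi) (hbias i hi) (hΔ i hi)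
      (hvar i hi)).trans_eq (by ring)
  have hsum := sum_mirror_schedule_le ha₀ (by positivity) (by positivity) (by positivity) ha hδ
    he hstep hn
  have hJensen := integral_comp_sum_div_card_le (μ := μ) hΘcp hΘcv (F := fun y => J y - J θstar)
    (hJc.sub continuous_const) (hJΘ.sub (concaveOn_const _ hΘcv)) hθm hθΘ (s := Icc 1 n)
    ⟨1, by simp [hn]⟩
  rw [Nat.card_Icc, Nat.add_sub_cancel] at hJensen
  calc _ ≤ _ := hJensen
    _ ≤ _ := by gcongr
    _ ≤ _ := mirror_descent_rate_le ha₀ hc hκ (by exact_mod_cast hn)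

/-- Corollary 3(b): mirror descent with symmetric finite differences
(`β = 2`), bounded conditional variance (`γ = 0`), stepsizes
`a_n = a n^{−1/2}` and widths `δ_n = d n^{−1}`; no `log n` factor appears. -/
theorem md_corollary3b
    {Ω : Type*} {m0 : MeasurableSpace Ω} {μ : Measure Ω} [IsProbabilityMeasure μ]
    (ℱ : ℕ → MeasurableSpace Ω) (hℱ_le : ∀ n, ℱ n ≤ m0) (hℱ_mono : Monotone ℱ)
    (Θ : Set ℝ) (hΘne : Θ.Nonempty) (hΘcp : IsCompact Θ) (hΘcv : Convex ℝ Θ)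
    (J J' : ℝ → ℝ) (hJconv : ConvexOn ℝ Set.univ J)
    (hJ : ∀ x, HasDerivAt J (J' x) x)
    (θstar : ℝ) (hθstar : θstar ∈ Θ) (hmin : ∀ x ∈ Θ, J θstar ≤ J x)
    (ψ ψ' : ℝ → ℝ) (hψ : ∀ x, HasDerivAt ψ (ψ' x) x)
    (κ r : ℝ) (hκ : 0 < κ) (hr : 0 < r)
    (hD_lower : ∀ x ∈ Θ, ∀ y ∈ Θ,
      κ * (x - y) ^ 2 ≤ ψ x - ψ y - ψ' y * (x - y))
    (hD_upper : ∀ x ∈ Θ, ψ θstar - ψ x - ψ' x * (θstar - x) ≤ r ^ 2 / 2)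
    (K₁ K₂ : ℝ) (hK₁ : 0 < K₁) (hK₁₂ : K₁ ≤ K₂)
    (hJ'bound : ∀ x ∈ Θ, K₁ * |x - θstar| ≤ |J' x| ∧ |J' x| ≤ K₂ * |x - θstar|)
    (a₀ d₀ : ℝ) (ha₀ : 0 < a₀) (hd₀ : 0 < d₀)
    (a δ : ℕ → ℝ)
    (ha : ∀ n : ℕ, a n = a₀ * (n : ℝ) ^ (-(1 : ℝ) / 2))
    (hδ : ∀ n : ℕ, δ n = d₀ * (n : ℝ)⁻¹)
    (b c : ℝ) (hb : 0 ≤ b) (hc : 0 ≤ c)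
    (θ h Δ : ℕ → Ω → ℝ)
    (hθmeas : ∀ n, StronglyMeasurable[ℱ n] (θ n))
    (hhL2 : ∀ n, MemLp (h n) 2 μ)
    (hθΘ : ∀ n, ∀ᵐ ω ∂μ, θ n ω ∈ Θ)
    (hupdate : ∀ n : ℕ, 1 ≤ n → ∀ᵐ ω ∂μ,
      IsMinOn (fun x : ℝ => h n ω * x +
        (ψ x - ψ (θ n ω) - ψ' (θ n ω) * (x - θ n ω)) / a n) Θ (θ (n + 1) ω))
    (hbias : ∀ n : ℕ, 1 ≤ n →
      μ[h n | ℱ n] =ᵐ[μ] fun ω => J' (θ n ω) + Δ n ω)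
    (hΔ : ∀ n : ℕ, 1 ≤ n → ∀ᵐ ω ∂μ, |Δ n ω| ≤ b * δ n ^ 2)
    (hvar : ∀ n : ℕ, 1 ≤ n → ∀ᵐ ω ∂μ,
      (μ[fun ω' => (h n ω' - (μ[h n | ℱ n]) ω') ^ 2 | ℱ n]) ω ≤ c) :
    ∀ n : ℕ, 1 ≤ n →
      ∫ ω, (J ((∑ i ∈ Finset.Icc 1 n, θ i ω) / n) - J θstar) ∂μ ≤
        (r ^ 2 / 2 + 2 * (c / (2 * κ)) + 2 * (K₂ ^ 2 * r ^ 2 / (2 * κ ^ 2)))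
            * max a₀ a₀⁻¹ / Real.sqrt n
        + (9 / 7) * (b ^ 2 / κ) * d₀ ^ 4 * a₀ / n
        + 2 * (b * r / Real.sqrt (2 * κ)) * d₀ ^ 2 / n :=
  md_corollary3b_general ℱ hℱ_le Θ hΘcp hΘcv J J' hJconv hJ θstar hθstar ψ ψ' hψ κ r hκ hr hD_lower
    hD_upper K₁ K₂ hK₁ hK₁₂ hJ'bound a₀ d₀ ha₀ a δ ha hδ b c hb hc θ h Δ hθmeas hhL2 hθΘ hupdate
    hbias hΔ hvar
end

section
/- (Corollary 7, achievability for γ = −1) Let β > 0, let C₁, C̃₂, C₅ ≥ 0, a, d > 0, and set α = (β + 1)/(2β + 1), η = 1/(2β + 1), a_i = a·i^{−α}, δ_i = d·i^{−η}. Define H̃(n) = C₁/(n a_n) + (C̃₂/n)·Σ_{i=1}^n a_i δ_i^{−1} + (C₅/n)·Σ_{i=1}^n δ_i^{β}. Then there exists a constant C > 0 such that H̃(n) ≤ C·n^{−β/(2β+1)} for all n ≥ 1. In particular the bound decays at rate n^{−1/3} for β = 1 (one-sided differences) and n^{−2/5} for β = 2 (symmetric differences). -/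
/-! With `q = β / (2β + 1)` the exponents are tuned so that each of the three terms of `H̃(n)` is
a multiple of `n^(-q)`: the first because `α - 1 = -q`, the two averages because both
`a_i δ_i⁻¹` and `δ_i^β` are multiples of `i^(-q)` and `∑_{i ≤ n} i^(-q) ≤ n^(1-q) / (1 - q)`.
That sum bound compares each term with an increment of the concave function `x ↦ x^(1-q)`,
via Bernoulli's inequality. -/

open Finset Real

theorem mul_rpow_sub_one_le_rpow_sub_sub_one_rpow {p x : ℝ} (hp0 : 0 ≤ p) (hp1 : p ≤ 1)
    (hx : 1 ≤ x) : p * x ^ (p - 1) ≤ x ^ p - (x - 1) ^ p := by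
  have hx0 : 0 < x := by linarith
  have hinv : -1 ≤ -1 / x := by
    rw [neg_div, neg_le_neg_iff]; exact div_le_one_of_le₀ hx hx0.le
  have hsplit : x - 1 = x * (1 + -1 / x) := by field_simp; ring
  calc p * x ^ (p - 1) = x ^ p - x ^ p * (1 + p * (-1 / x)) := by
        rw [rpow_sub_one hx0.ne']; ring
    _ ≤ x ^ p - x ^ p * (1 + -1 / x) ^ p := by
        gcongr
        exact rpow_one_add_le_one_add_mul_self hinv hp0 hp1
    _ = x ^ p - (x - 1) ^ p := by
        rw [hsplit, mul_rpow hx0.le (by linarith)]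

theorem sum_Icc_rpow_neg_le {q : ℝ} (hq0 : 0 ≤ q) (hq1 : q < 1) (n : ℕ) :
    ∑ i ∈ Icc 1 n, (i : ℝ) ^ (-q) ≤ (n : ℝ) ^ (1 - q) / (1 - q) := by
  have hp : 0 < 1 - q := by linarith
  induction n with
  | zero => simp [zero_rpow hp.ne']
  | succ n ih =>
    have hstep := mul_rpow_sub_one_le_rpow_sub_sub_one_rpow hp.le (by linarith)
      (by simp : (1 : ℝ) ≤ (n + 1 : ℕ))
    rw [sum_Icc_succ_top (by omega), le_div_iff₀ hp]
    rw [le_div_iff₀ hp] at ih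
    push_cast at hstep ⊢
    rw [show 1 - q - 1 = -q by ring, add_sub_cancel_right] at hstep
    linarith

theorem div_mul_sum_Icc_rpow_neg_le {q c : ℝ} (hq0 : 0 ≤ q) (hq1 : q < 1) (hc : 0 ≤ c)
    (n : ℕ) : c / n * ∑ i ∈ Icc 1 n, (i : ℝ) ^ (-q) ≤ c / (1 - q) * (n : ℝ) ^ (-q) := by
  rcases n.eq_zero_or_pos with rfl | hn
  · simp only [CharP.cast_eq_zero, div_zero, zero_mul]; positivity
  have hn' : (0 : ℝ) < n := by exact_mod_cast hn
  calc c / n * ∑ i ∈ Icc 1 n, (i : ℝ) ^ (-q) ≤ c / n * ((n : ℝ) ^ (1 - q) / (1 - q)) := by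
        gcongr; exact sum_Icc_rpow_neg_le hq0 hq1 n
    _ = c / (1 - q) * (n : ℝ) ^ (-q) := by
        rw [sub_eq_add_neg, add_comm, rpow_add_one hn'.ne']
        field_simp

/-- Corollary 7 (achievability for `γ = −1`, common random numbers): with
`α = (β+1)/(2β+1)`, `η = 1/(2β+1)`, `a_i = a i^{−α}`, `δ_i = d i^{−η}`, the
mirror descent error bound `H̃(n)` decays at rate `n^{−β/(2β+1)}`. -/
theorem md_corollary7_achievability
    (β C₁ C₂t C₅ a d : ℝ) (hβ : 0 < β)
    (hC₁ : 0 ≤ C₁) (hC₂t : 0 ≤ C₂t) (hC₅ : 0 ≤ C₅)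
    (ha : 0 < a) (hd : 0 < d)
    (α η : ℝ) (hα : α = (β + 1) / (2 * β + 1)) (hη : η = 1 / (2 * β + 1))
    (as δs : ℕ → ℝ)
    (has : ∀ i : ℕ, as i = a * (i : ℝ) ^ (-α))
    (hδs : ∀ i : ℕ, δs i = d * (i : ℝ) ^ (-η))
    (Ht : ℕ → ℝ)
    (hHt : ∀ n : ℕ, Ht n =
      C₁ / (n * as n)
      + C₂t / n * ∑ i ∈ Finset.Icc 1 n, as i * δs i ^ (-1 : ℝ)
      + C₅ / n * ∑ i ∈ Finset.Icc 1 n, δs i ^ β) :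
    ∃ C : ℝ, 0 < C ∧ ∀ n : ℕ, 1 ≤ n →
      Ht n ≤ C * (n : ℝ) ^ (-(β / (2 * β + 1))) := by
  have hαq : α - 1 = -(β / (2 * β + 1)) := by rw [hα]; field_simp; ring
  have hηα : -α + η = -(β / (2 * β + 1)) := by rw [hα, hη]; field_simp; ring
  have hηβ : -η * β = -(β / (2 * β + 1)) := by rw [hη]; field_simp
  set q := β / (2 * β + 1)
  have hq0 : 0 ≤ q := by positivity
  have hq1 : q < 1 := (div_lt_one (by positivity)).mpr (by linarith)
  have hq : -q ≠ 0 := neg_ne_zero.mpr (by positivity)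
  have hfirst (n : ℕ) : C₁ / (n * as n) = C₁ / a * (n : ℝ) ^ (-q) := by
    rw [has, rpow_neg (Nat.cast_nonneg n), ← hαq,
      rpow_sub' (Nat.cast_nonneg n) (hαq ▸ hq), rpow_one]
    field_simp
  have hsecond (i : ℕ) : as i * δs i ^ (-1 : ℝ) = a / d * (i : ℝ) ^ (-q) := by
    rw [has, hδs, rpow_neg_one, mul_inv, ← rpow_neg (Nat.cast_nonneg i), neg_neg, ← hηα,
      rpow_add' (Nat.cast_nonneg i) (hηα ▸ hq)]
    field_simp
  have hthird (i : ℕ) : δs i ^ β = d ^ β * (i : ℝ) ^ (-q) := by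
    rw [hδs, mul_rpow hd.le (by positivity), ← rpow_mul (Nat.cast_nonneg i), hηβ]
  refine ⟨C₁ / a + (C₂t * (a / d) + C₅ * d ^ β) / (1 - q) + 1, by positivity, fun n _ => ?_⟩
  have hsum₂ := div_mul_sum_Icc_rpow_neg_le hq0 hq1 (by positivity : 0 ≤ C₂t * (a / d)) n
  have hsum₃ := div_mul_sum_Icc_rpow_neg_le hq0 hq1 (by positivity : 0 ≤ C₅ * d ^ β) n
  simp only [mul_div_right_comm _ _ (n : ℝ), mul_assoc] at hsum₂ hsum₃
  simp only [hHt, hfirst, hsecond, hthird, ← mul_sum]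
  calc _ ≤ (C₁ / a + (C₂t * (a / d) + C₅ * d ^ β) / (1 - q)) * (n : ℝ) ^ (-q) := by
        rw [add_div]; linarith
    _ ≤ _ := mul_le_mul_of_nonneg_right (le_add_of_nonneg_right zero_le_one) (by positivity)
end
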